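/- For every natural number d, C(d,5) = −(60/(5·4·3))·L_d(2) + (35/(5·4·2!))·L_d(3) − (10/(5·3!))·L_d(4) + (1/4!)·L_d(5) as rational numbers, where L_d(w) = (1/w)·Σ_{r ∣ w} μ(r)·d^{w/r} is the Witt number. -/

import Mathlib

/-- The Witt number `L_d(w) = (1/w) * Σ_{r ∣ w} μ(r) * d^(w/r)`, as a rational number. -/
def witt (d w : ℕ) : ℚ :=
  (1 / w : ℚ) * ∑ r ∈ w.divisors, (ArithmeticFunction.moebius r : ℚ) * (d : ℚ) ^ (w / r)

/-!
Since `μ` vanishes on `p²`, the Witt numbers of weights `p` and `p²` are `(d^p - d)/p` and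
`(d^(p²) - d^p)/p²`. Together with `C(d,5) = d(d-1)(d-2)(d-3)(d-4)/5!` this turns the identity
into a polynomial identity in `d`.
-/

open ArithmeticFunction

theorem witt_prime (d : ℕ) {p : ℕ} (hp : p.Prime) : witt d p = ((d : ℚ) ^ p - d) / p := by
  rw [witt, hp.sum_divisors, moebius_apply_prime hp, moebius_apply_one, Nat.div_self hp.pos,
    Nat.div_one]
  push_cast
  ring

theorem witt_prime_sq (d : ℕ) {p : ℕ} (hp : p.Prime) :
    witt d (p ^ 2) = ((d : ℚ) ^ (p ^ 2) - d ^ p) / p ^ 2 := by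
  rw [witt, Nat.sum_divisors_prime_pow hp, Finset.sum_range_succ, Finset.sum_range_succ,
    Finset.sum_range_one, moebius_apply_prime_pow hp two_ne_zero,
    if_neg (by decide : (2 : ℕ) ≠ 1), pow_zero, pow_one, moebius_apply_one,
    moebius_apply_prime hp, Nat.div_one, pow_two p, Nat.mul_div_cancel _ hp.pos]
  push_cast
  ring

/-- C(d,5) = −(60/(5·4·3))·L_d(2) + (35/(5·4·2!))·L_d(3) − (10/(5·3!))·L_d(4) + (1/4!)·L_d(5). -/
theorem choose_five_eq (d : ℕ) :
    (d.choose 5 : ℚ) =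
      -(60 / (5 * 4 * 3)) * witt d 2 + (35 / (5 * 4 * 2)) * witt d 3
        - (10 / (5 * 6)) * witt d 4 + (1 / 24) * witt d 5 := by
  rw [show witt d 4 = witt d (2 ^ 2) from rfl, witt_prime_sq d Nat.prime_two,
    witt_prime d Nat.prime_two, witt_prime d Nat.prime_three, witt_prime d Nat.prime_five,
    Nat.cast_choose_eq_descPochhammer_div]
  simp only [descPochhammer_succ_eval, descPochhammer_zero, Polynomial.eval_one]
  push_cast [Nat.factorial]
  ring
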